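/- arXiv:1408.4997 — 7 statements merged into one kernel-verified Lean document; each statement's English description precedes it below -/
import Mathlib

section
/- Fix an integer n ≥ 2 and consider the strip of unit cells indexed by integers x with −2^(n−1) ≤ x < 2^(n−1), folded n times according to the folding model described in the context. Then the total number of folds at which the cell starting at x is reflected is odd (equivalently, the cell faces downwards in the final folded pile, having started face up) if and only if x is even. -/
/-- The fold threshold `c_k = 2^(n-1) - 2^(n-k)` (note `c_1 = 0`, matching the
first fold along `x = 0`). -/
def foldC (n k : ℕ) : ℤ := 2 ^ (n - 1) - 2 ^ (n - k)

/-- The position `q_k(x)` of the unit cell with left end point `x` after the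
first `k` of the `n` folds: `q_0(x) = x`, and at the `k`-th fold the cell is
reflected iff `q_{k-1}(x) < c_k`, in which case `q_k(x) = 2 c_k - 1 - q_{k-1}(x)`;
otherwise `q_k(x) = q_{k-1}(x)`. -/
def foldQ (n : ℕ) : ℕ → ℤ → ℤ
  | 0, x => x
  | k + 1, x =>
      let p := foldQ n k x
      if p < foldC n (k + 1) then 2 * foldC n (k + 1) - 1 - p else p

/-- The cell starting at `x` is reflected at the `k`-th fold (`1 ≤ k ≤ n`). -/
def reflectedAt (n k : ℕ) (x : ℤ) : Prop := foldQ n (k - 1) x < foldC n k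

instance (n k : ℕ) (x : ℤ) : Decidable (reflectedAt n k x) := by
  unfold reflectedAt; infer_instance

/-!
Each fold halves the strip from the left: with `c_0 = -2^(n-1)`, the threshold `c_k` is the
midpoint of `[c_(k-1), 2^(n-1))`, so after the `k`-th fold all cells lie in `[c_k, 2^(n-1))`.
Since `c_n = 2^(n-1) - 1`, every cell ends at the odd position `2^(n-1) - 1`. A reflection
`p ↦ 2c - 1 - p` changes the parity of the position, so the number of reflections of the cell
starting at `x` has the parity of `(2^(n-1) - 1) - x`.
-/

open Finset

lemma foldQ_succ (n k : ℕ) (x : ℤ) :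
    foldQ n (k + 1) x = if foldQ n k x < foldC n (k + 1) then
      2 * foldC n (k + 1) - 1 - foldQ n k x else foldQ n k x := rfl

lemma foldC_zero {n : ℕ} (hn : 1 ≤ n) : foldC n 0 = -2 ^ (n - 1) := by
  obtain ⟨m, rfl⟩ := Nat.exists_eq_add_of_le' hn
  simp only [foldC, Nat.add_sub_cancel, Nat.sub_zero, pow_succ]
  ring

lemma foldC_self (n : ℕ) : foldC n n = 2 ^ (n - 1) - 1 := by
  simp [foldC]

lemma two_mul_foldC_succ {n k : ℕ} (hk : k + 1 ≤ n) :
    2 * foldC n (k + 1) = foldC n k + 2 ^ (n - 1) := by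
  rw [foldC, foldC, show n - k = n - (k + 1) + 1 by omega, pow_succ]
  ring

lemma reflect_mem_Ico {a b P q : ℤ} (hb : 2 * b = a + P) (hq : q ∈ Set.Ico a P) :
    (if q < b then 2 * b - 1 - q else q) ∈ Set.Ico b P := by
  obtain ⟨hqa, hqP⟩ := hq
  split_ifs <;> constructor <;> omega

lemma foldQ_mem_Ico {n k : ℕ} {x : ℤ} (hk : k ≤ n)
    (hx : x ∈ Set.Ico (foldC n 0) (2 ^ (n - 1))) :
    foldQ n k x ∈ Set.Ico (foldC n k) (2 ^ (n - 1)) := by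
  induction k with
  | zero => exact hx
  | succ k ih =>
    rw [foldQ_succ]
    exact reflect_mem_Ico (two_mul_foldC_succ hk) (ih (by omega))

lemma foldQ_self {n : ℕ} {x : ℤ} (hn : 1 ≤ n)
    (hx1 : -(2 ^ (n - 1)) ≤ x) (hx2 : x < 2 ^ (n - 1)) :
    foldQ n n x = 2 ^ (n - 1) - 1 := by
  have hx : x ∈ Set.Ico (foldC n 0) (2 ^ (n - 1)) := ⟨(foldC_zero hn).symm ▸ hx1, hx2⟩
  obtain ⟨hlow, hhigh⟩ := foldQ_mem_Ico le_rfl hx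
  rw [foldC_self] at hlow
  omega

lemma even_foldQ_add_iff (n k : ℕ) (x : ℤ) :
    Even (foldQ n k x + x) ↔ Even #{j ∈ Icc 1 k | reflectedAt n j x} := by
  induction k with
  | zero => simp [foldQ]
  | succ k ih =>
    rw [card_filter, sum_Icc_succ_top (by omega), ← card_filter, Nat.even_add, ← ih, foldQ_succ]
    simp only [reflectedAt, Nat.add_sub_cancel]
    split_ifs
    · simp only [Nat.not_even_one, iff_false, Int.even_iff]
      omega
    · simp

/-- For `n ≥ 2` and a cell `[x, x+1)` of the strip `[-2^(n-1), 2^(n-1))` folded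
`n` times, the total number of folds at which the cell is reflected is odd
(i.e. the cell ends face down, having started face up) iff `x` is even. -/
theorem stmt0 (n : ℕ) (hn : 2 ≤ n) (x : ℤ)
    (hx1 : -(2 ^ (n - 1)) ≤ x) (hx2 : x < 2 ^ (n - 1)) :
    Odd ((Finset.Icc 1 n).filter (fun k => reflectedAt n k x)).card ↔ Even x := by
  have hpow : Even ((2 : ℤ) ^ (n - 1)) := (Int.even_pow' (by omega)).2 even_two
  rw [← Nat.not_even_iff_odd, ← even_foldQ_add_iff, foldQ_self (by omega) hx1 hx2,
    Int.even_add, Int.even_sub]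
  simp [hpow]
end

section
/- For every d ≥ 1 the d-dimensional paperfolding substitution μd is primitive: there exists a positive integer k such that for every letter α ∈ A_d and every letter β ∈ A_d, β occurs among the values of the block μd^k(α). -/
/-- The alphabet `A_d` of the `d`-dimensional paperfolding substitution:
a letter is a pair `(ε, p)` with `ε ∈ {−1, +1}^d` (crease signs on the lower
faces of a semi-cube, encoded in `ℤˣ`) and `p ∈ {0, 1}^d` (parities of the
reference point). -/
abbrev PFLetter (d : ℕ) := (Fin d → ℤˣ) × (Fin d → Fin 2)

/-- The sign `2δ − 1 ∈ {−1, +1}` associated to `δ ∈ {0, 1}`. -/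
def deltaSign : Fin 2 → ℤˣ := fun δ => if δ = 0 then -1 else 1

/-- `N(p, i) = #{j : j ≥ i and p_j = 0}`. -/
def Npar (d : ℕ) (p : Fin d → Fin 2) (i : Fin d) : ℕ :=
  (Finset.univ.filter (fun j : Fin d => i ≤ j ∧ p j = 0)).card

/-- The `d`-dimensional paperfolding substitution `μd`, sending a letter
`(ε, p)` to the block indexed by `δ ∈ {0,1}^d` with value `(ε', δ)`, where
`ε'_i = ε_i` if `δ_i = 0` and `ε'_i = (−1)^{N(p,i)} ∏_{j<i} (2δ_j − 1)`
if `δ_i = 1`. -/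
def muSub (d : ℕ) (α : PFLetter d) (δ : Fin d → Fin 2) : PFLetter d :=
  (fun i => if δ i = 0 then α.1 i
    else (-1 : ℤˣ) ^ (Npar d α.2 i) *
      ∏ j ∈ Finset.univ.filter (fun j => j < i), deltaSign (δ j),
   δ)

/-- The iterate `μd^k(α)`, a block with coordinates `x ∈ {0, …, 2^k − 1}^d`:
`μd^0(α)(0) = α` and `μd^{k+1}(α)(x) = μd(μd^k(α)(⌊x/2⌋))(x mod 2)`,
coordinatewise. -/
def muIter (d : ℕ) : ℕ → PFLetter d → (Fin d → ℕ) → PFLetter d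
  | 0, α, _ => α
  | k + 1, α, x =>
      muSub d (muIter d k α (fun i => x i / 2))
        (fun i => if x i % 2 = 0 then 0 else 1)

/-
A letter `β = (ε, q)` appears in `μd³(α)` at the position with binary digits `r, p, q`, once
`r` and `p` are chosen well. Writing `σ(p, i) = (-1)^{N(p,i)} = ∏_{j ≥ i} (2p_j - 1)`, the
`i`-th sign of `μd(μd(μd(α)(r))(p))(q)` is `σ(p, i) ∏_{j<i} (2q_j - 1)` when `q_i = 1`, and
`σ(r, i) ∏_{j<i} (2p_j - 1)` when `q_i = 0` and `p_i = 1`. The suffix products `σ(p, ·)` can be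
prescribed arbitrarily on any set `S` of indices while keeping `p = 1` off `S` (build `p` downward
from `i = d - 1`, since `σ(p, i) = (2p_i - 1) σ(p, i + 1)`). So `p` is chosen to fix the signs where
`q_i = 1`, with `p_i = 1` where `q_i = 0`, and then `r` to fix the rest.
-/

lemma deltaSign_eq_neg_one_pow (δ : Fin 2) : deltaSign δ = (-1) ^ (if δ = 0 then 1 else 0) := by
  unfold deltaSign; split_ifs <;> simp

lemma deltaSign_surjective : Function.Surjective deltaSign := by
  intro u
  rcases Int.units_eq_one_or u with rfl | rfl
  exacts [⟨1, rfl⟩, ⟨0, rfl⟩]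

lemma neg_one_pow_Npar (d : ℕ) (p : Fin d → Fin 2) (i : Fin d) :
    (-1 : ℤˣ) ^ Npar d p i = ∏ j ∈ Finset.univ.filter (i ≤ ·), deltaSign (p j) := by
  simp only [deltaSign_eq_neg_one_pow, Finset.prod_pow_eq_pow_sum, Npar, Finset.card_filter,
    Finset.sum_filter, ite_and]

lemma prod_deltaSign_ge_cons_succ (d : ℕ) (a : Fin 2) (p : Fin d → Fin 2) (i : Fin d) :
    ∏ j ∈ Finset.univ.filter (i.succ ≤ ·), deltaSign ((Fin.cons a p : Fin (d + 1) → Fin 2) j) =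
      ∏ j ∈ Finset.univ.filter (i ≤ ·), deltaSign (p j) := by
  simp [Finset.prod_filter, Fin.prod_univ_succ]

lemma exists_neg_one_pow_Npar_eqOn (d : ℕ) (S : Fin d → Prop) (t : Fin d → ℤˣ) :
    ∃ p : Fin d → Fin 2, (∀ i, ¬ S i → p i = 1) ∧ ∀ i, S i → (-1 : ℤˣ) ^ Npar d p i = t i := by
  simp only [neg_one_pow_Npar]
  induction d with
  | zero => exact ⟨finZeroElim, finZeroElim, finZeroElim⟩
  | succ d ih =>
    obtain ⟨p, hp_off, hp_on⟩ := ih (fun i => S i.succ) (fun i => t i.succ)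
    classical
    obtain ⟨a, ha⟩ := deltaSign_surjective (t 0 * (∏ j, deltaSign (p j))⁻¹)
    refine ⟨Fin.cons (if S 0 then a else 1) p, fun i => ?_, fun i => ?_⟩ <;>
      induction i using Fin.cases with
      | zero =>
        by_cases h0 : S 0
        · simp [h0, Fin.prod_univ_succ, ha, mul_assoc, Int.units_mul_self]
        · simp [h0]
      | succ i => simp_all [prod_deltaSign_ge_cons_succ]

lemma muIter_succ_two_mul_add (d k : ℕ) (α : PFLetter d) (x : Fin d → ℕ) (δ : Fin d → Fin 2) :
    muIter d (k + 1) α (fun i => 2 * x i + δ i) = muSub d (muIter d k α x) δ := by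
  have hdiv : (fun i => (2 * x i + δ i) / 2) = x := by
    funext i; have := δ i |>.isLt; omega
  have hmod : (fun i => if (2 * x i + δ i) % 2 = 0 then (0 : Fin 2) else 1) = δ := by
    funext i; have := δ i |>.isLt; ext; split_ifs <;> omega
  rw [muIter, hdiv, hmod]

lemma muIter_one (d : ℕ) (α : PFLetter d) (δ : Fin d → Fin 2) :
    muIter d 1 α (fun i => δ i) = muSub d α δ := by
  simpa [muIter] using muIter_succ_two_mul_add d 0 α 0 δ

theorem stmt3_general (d : ℕ) :
    ∃ k : ℕ, 0 < k ∧ ∀ α β : PFLetter d, ∃ x : Fin d → ℕ,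
      (∀ i, x i < 2 ^ k) ∧ muIter d k α x = β := by
  refine ⟨3, by norm_num, fun α ⟨ε, q⟩ => ?_⟩
  obtain ⟨p, hp_off, hp_on⟩ := exists_neg_one_pow_Npar_eqOn d (q · = 1)
    fun i => ε i * ∏ j ∈ Finset.univ.filter (· < i), deltaSign (q j)
  obtain ⟨r, -, hr⟩ := exists_neg_one_pow_Npar_eqOn d (fun _ => True)
    fun i => ε i * ∏ j ∈ Finset.univ.filter (· < i), deltaSign (p j)
  refine ⟨fun i => 2 * (2 * r i + p i) + q i, fun i => by simp only; omega, ?_⟩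
  rw [muIter_succ_two_mul_add, muIter_succ_two_mul_add, muIter_one]
  refine Prod.ext (funext fun i => ?_) rfl
  obtain hq | hq : q i = 0 ∨ q i = 1 := by omega
  · simp [muSub, hq, hp_off i (by simp [hq]), hr, mul_assoc, Int.units_mul_self]
  · simp [muSub, hq, hp_on i hq, mul_assoc, Int.units_mul_self]

/-- The `d`-dimensional paperfolding substitution is primitive: there is a
positive integer `k` such that for all letters `α, β`, the letter `β` occurs
among the values of the block `μd^k(α)`. -/
theorem stmt3 (d : ℕ) (hd : 1 ≤ d) :
    ∃ k : ℕ, 0 < k ∧ ∀ α β : PFLetter d, ∃ x : Fin d → ℕ,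
      (∀ i, x i < 2 ^ k) ∧ muIter d k α x = β :=
  stmt3_general d
end

section
/- For every d ≥ 1, the d-dimensional paperfolding substitution μd admits a coincidence in the sense of Dekking: for every letter α ∈ A_d, the letter of the block μd^2(α) at position (3,3,…,3) is the same, namely the letter (ε*, p*) with ε*_i = +1 and p*_i = 1 for all i ∈ {1,…,d}. -/
variable {d : ℕ}

theorem Npar_const_one (i : Fin d) : Npar d (fun _ => 1) i = 0 := by
  simp [Npar]

theorem muSub_snd (α : PFLetter d) (δ : Fin d → Fin 2) : (muSub d α δ).2 = δ := rfl

theorem muSub_const_one_fst (α : PFLetter d) (i : Fin d) :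
    (muSub d α (fun _ => 1)).1 i = (-1) ^ Npar d α.2 i := by
  simp [muSub, deltaSign]

theorem muSub_muSub_const_one (α : PFLetter d) :
    muSub d (muSub d α (fun _ => 1)) (fun _ => 1) = (fun _ => 1, fun _ => 1) := by
  ext i
  · rw [muSub_const_one_fst, muSub_snd, Npar_const_one, pow_zero]
  · rfl

theorem muIter_two_const_three (α : PFLetter d) :
    muIter d 2 α (fun _ => 3) = muSub d (muSub d α (fun _ => 1)) (fun _ => 1) := by
  simp [muIter]

theorem stmt4_general (d : ℕ) (α : PFLetter d) :
    muIter d 2 α (fun _ => 3) =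
      (fun _ => (1 : ℤˣ), fun _ => (1 : Fin 2)) := by
  rw [muIter_two_const_three, muSub_muSub_const_one]

/-- `μd` admits a coincidence in the sense of Dekking: for every letter `α`,
the letter of `μd^2(α)` at position `(3, 3, …, 3)` is the letter `(ε*, p*)`
with `ε*_i = +1` and `p*_i = 1` for all `i`. -/
theorem stmt4 (d : ℕ) (hd : 1 ≤ d) (α : PFLetter d) :
    muIter d 2 α (fun _ => 3) =
      (fun _ => (1 : ℤˣ), fun _ => (1 : Fin 2)) :=
  stmt4_general d α
end

section
/- For every d ≥ 1 there exists a constant C such that for every n ≥ 1, the number of distinct d-dimensional cubic blocks B : {0,…,n−1}^d → A_d that occur as a subblock of some iterate of the d-dimensional paperfolding substitution μd (i.e., for which there exist k ≥ 0, a letter α ∈ A_d, and an offset t ∈ ℤ^d with 0 ≤ t_i and t_i + n ≤ 2^k for all i, such that B(x) = μd^k(α)(x + t) for all x ∈ {0,…,n−1}^d) is at most C · n^d. -/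
/-- The set of distinct cubic blocks of linear size `n` occurring in some
iterate of `μd`. -/
def pfPatterns (d n : ℕ) : Set ((Fin d → Fin n) → PFLetter d) :=
  {B | ∃ (k : ℕ) (α : PFLetter d) (t : Fin d → ℕ),
    (∀ i, t i + n ≤ 2 ^ k) ∧
    ∀ x : Fin d → Fin n, B x = muIter d k α (fun i => (x i : ℕ) + t i)}



/-!
Cut `μd^k(α)` into sub-blocks `μd^m(β)` of side `2^m`, where `2^m` is the least power of two
that is `≥ n`. A cubic block of side `n` then meets at most `2^d` of these sub-blocks, so it is
determined by a `2 × ⋯ × 2` window of level-`(k - m)` letters together with its offset modulo `2^m`.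
This gives at most `|A_d|^(2^d) · (2^m)^d ≤ |A_d|^(2^d) · 2^d · n^d` blocks.
-/

lemma muIter_add (d m r : ℕ) (α : PFLetter d) (y : Fin d → ℕ) :
    muIter d (m + r) α y =
      muIter d m (muIter d r α fun i => y i / 2 ^ m) fun i => y i % 2 ^ m := by
  induction m generalizing y with
  | zero => simp [muIter]
  | succ m ih =>
    rw [Nat.add_right_comm, muIter, ih, muIter]
    congr 3 with i
    · rw [Nat.div_div_eq_div_mul, pow_succ']
    · rw [pow_succ', Nat.mod_mul_right_div_self]
    · rw [Nat.mod_mod_of_dvd _ (dvd_pow_self 2 m.succ_ne_zero)]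

/-- The block of side `n` at offset `s` in the juxtaposition of the `2^d` cubes `μd^m(W u)`,
`u ∈ {0,1}^d`. It is meant for `n ≤ 2^m`, where the carry `(s + x) / 2^m` is `0` or `1`. -/
def windowBlock (d n m : ℕ) (W : (Fin d → Fin 2) → PFLetter d) (s : Fin d → Fin (2 ^ m)) :
    (Fin d → Fin n) → PFLetter d :=
  fun x => muIter d m (W fun i => Fin.ofNat 2 (((s i : ℕ) + x i) / 2 ^ m))
    fun i => ((s i : ℕ) + x i) % 2 ^ m

lemma muIter_block_eq_windowBlock {d n m : ℕ} (r : ℕ) (hn : n ≤ 2 ^ m) (α : PFLetter d)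
    (t : Fin d → ℕ) :
    (fun x : Fin d → Fin n => muIter d (m + r) α fun i => x i + t i) =
      windowBlock d n m (fun u => muIter d r α fun i => t i / 2 ^ m + u i)
        fun i => ⟨t i % 2 ^ m, Nat.mod_lt _ (by positivity)⟩ := by
  have hM : 0 < 2 ^ m := by positivity
  funext x
  rw [muIter_add, windowBlock]
  have hsplit : ∀ i, (x i : ℕ) + t i = t i % 2 ^ m + x i + 2 ^ m * (t i / 2 ^ m) := fun i => by
    have := Nat.mod_add_div (t i) (2 ^ m); omega
  congr 2 with i
  · have hcarry : (t i % 2 ^ m + x i) / 2 ^ m < 2 := by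
      have := Nat.mod_lt (t i) hM; have := (x i).isLt
      exact Nat.div_lt_of_lt_mul (by omega)
    rw [Fin.val_ofNat, Nat.mod_eq_of_lt hcarry, hsplit, Nat.add_mul_div_left _ _ hM, add_comm]
  · rw [hsplit, Nat.add_mul_mod_self_left]

lemma pfPatterns_subset_range_windowBlock {d : ℕ} (hd : 1 ≤ d) (n : ℕ) :
    pfPatterns d n ⊆ Set.range (Function.uncurry (windowBlock d n (Nat.clog 2 n))) := by
  rintro B ⟨k, α, t, ht, hB⟩
  have hnk : n ≤ 2 ^ k := (Nat.le_add_left n _).trans (ht ⟨0, hd⟩)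
  obtain ⟨r, rfl⟩ := Nat.exists_eq_add_of_le (Nat.clog_le_of_le_pow hnk)
  rw [show B = _ from funext hB,
    muIter_block_eq_windowBlock r (Nat.le_pow_clog one_lt_two n)]
  exact ⟨(_, _), rfl⟩

lemma pow_clog_le_mul {b n : ℕ} (hb : 1 ≤ b) (hn : 1 ≤ n) : b ^ Nat.clog b n ≤ b * n := by
  rcases h : Nat.clog b n with _ | c
  · exact Nat.mul_le_mul hb hn
  · rw [pow_succ']
    exact Nat.mul_le_mul_left b (Nat.pow_lt_of_lt_clog (by omega)).le

/-- There is a constant `C` such that for every `n ≥ 1`, the number of distinct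
cubic subblocks of linear size `n` occurring in iterates of the `d`-dimensional
paperfolding substitution is at most `C · n^d`. -/
theorem stmt5 (d : ℕ) (hd : 1 ≤ d) :
    ∃ C : ℕ, ∀ n : ℕ, 1 ≤ n →
      (pfPatterns d n).Finite ∧ (pfPatterns d n).ncard ≤ C * n ^ d := by
  refine ⟨Fintype.card (PFLetter d) ^ 2 ^ d * 2 ^ d, fun n hn => ?_⟩
  have hsub := pfPatterns_subset_range_windowBlock hd n
  refine ⟨(Set.finite_range _).subset hsub, ?_⟩
  calc (pfPatterns d n).ncard
      ≤ (Set.range (Function.uncurry (windowBlock d n (Nat.clog 2 n)))).ncard :=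
        Set.ncard_le_ncard hsub (Set.finite_range _)
    _ ≤ Nat.card (((Fin d → Fin 2) → PFLetter d) × (Fin d → Fin (2 ^ Nat.clog 2 n))) := by
        rw [← Nat.card_coe_set_eq]; exact Finite.card_range_le _
    _ = Fintype.card (PFLetter d) ^ 2 ^ d * (2 ^ Nat.clog 2 n) ^ d := by
        simp only [Nat.card_eq_fintype_card, Fintype.card_prod, Fintype.card_fun, Fintype.card_fin]
    _ ≤ Fintype.card (PFLetter d) ^ 2 ^ d * (2 * n) ^ d := by
        gcongr; exact pow_clog_le_mul one_le_two hn
    _ = Fintype.card (PFLetter d) ^ 2 ^ d * 2 ^ d * n ^ d := by ring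
end

section
/- The substitution ν2 generates the 2-dimensional paperfolding structures: for every n ≥ 0 and all integers (x,y) with −2^n ≤ x < 2^n and −2^n ≤ y < 2^n, the creases v_{n+2}(x,y) and h_{n+2}(x,y) are nonzero, and the entry of the block ν2^n(Σ) at position (x + 2^n, y + 2^n) equals b_{ij}, where i = 2u + w with u = 1 if v_{n+2}(x,y) = −1 and u = 0 if v_{n+2}(x,y) = +1, w = 1 if h_{n+2}(x,y) = −1 and w = 0 if h_{n+2}(x,y) = +1; and j = 0 if x and y are both even, j = 1 if x is even and y is odd, j = 2 if x is odd and y is even, j = 3 if x and y are both odd. -/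
/-- The 16-letter alphabet `B = {bij : 0 ≤ i, j ≤ 3}` of the 2-dimensional
paperfolding substitution; the letter `bij` is the pair `(i, j)`. -/
abbrev PFB := Fin 4 × Fin 4

/-- A `2 × 2` block `[SW, SE; NW, NE]`, as a function of the coordinates
`(dx, dy) ∈ {0,1}²` (encoded as booleans, `true = 1`): `(0,0)` is the
bottom-left (SW) cell, the first coordinate is horizontal. -/
def ent (sw se nw ne : PFB) : Bool → Bool → PFB :=
  fun dx dy => if dy then (if dx then ne else nw) else (if dx then se else sw)

/-- The 2-dimensional paperfolding substitution `ν2`, sending each letter to a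
`2 × 2` block of letters (given here by the explicit table). -/
def nu2 : PFB → Bool → Bool → PFB :=
  fun b =>
    ![![ent (0,0) (0,2) (0,1) (1,3), ent (0,0) (2,2) (1,1) (2,3),
       ent (0,0) (2,2) (0,1) (3,3), ent (0,0) (0,2) (1,1) (0,3)],
      ![ent (1,0) (1,2) (0,1) (1,3), ent (1,0) (3,2) (1,1) (2,3),
       ent (1,0) (3,2) (0,1) (3,3), ent (1,0) (1,2) (1,1) (0,3)],
      ![ent (2,0) (0,2) (2,1) (1,3), ent (2,0) (2,2) (3,1) (2,3),
       ent (2,0) (2,2) (2,1) (3,3), ent (2,0) (0,2) (3,1) (0,3)],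
      ![ent (3,0) (1,2) (2,1) (1,3), ent (3,0) (3,2) (3,1) (2,3),
       ent (3,0) (3,2) (2,1) (3,3), ent (3,0) (1,2) (3,1) (0,3)]] b.1 b.2

/-- The iterate `ν2^k(b)`, a `2^k × 2^k` block with coordinates
`(x, y) ∈ {0, …, 2^k − 1}²` (`(0,0)` at the bottom-left, first coordinate
horizontal): `ν2^0(b)(0,0) = b` and
`ν2^{k+1}(b)(x,y) = ν2(ν2^k(b)(⌊x/2⌋, ⌊y/2⌋))(x mod 2, y mod 2)`. -/
def nu2Iter : ℕ → PFB → ℕ → ℕ → PFB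
  | 0, b, _, _ => b
  | k + 1, b, x, y =>
      nu2 (nu2Iter k b (x / 2) (y / 2)) (x % 2 == 1) (y % 2 == 1)

/-- The standard seed `Σ`: `Σ(0,0) = b13`, `Σ(1,0) = b01`, `Σ(0,1) = b32`,
`Σ(1,1) = b00`. -/
def pfSeed : ℕ → ℕ → PFB :=
  fun x y =>
    if x = 0 then (if y = 0 then (1,3) else (3,2))
    else (if y = 0 then (0,1) else (0,0))

/-- `ν2^k(Σ)(x,y) = ν2^k(Σ(⌊x/2^k⌋, ⌊y/2^k⌋))(x mod 2^k, y mod 2^k)`. -/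
def seedIter (k x y : ℕ) : PFB :=
  nu2Iter k (pfSeed (x / 2 ^ k) (y / 2 ^ k)) (x % 2 ^ k) (y % 2 ^ k)

/-- Signs of vertical creases of the 2-dimensional paperfolding pattern
`S_2(n)`: `vPF n x y` is the sign (`+1` valley, `−1` crest, `0` no crease) of
the crease on the vertical unit edge `{x} × [y, y+1]`.  It vanishes outside the
square `[−2^{n−1}, 2^{n−1}]²`; the central creases (on `x = 0`) are `+1`; and
creases strictly inside a quadrant `φ` come from a reflected copy of the
previous generation. -/
def vPF : ℕ → ℤ → ℤ → ℤ
  | 0, _, _ => 0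
  | n + 1, x, y =>
      if x = 0 then (if -(2 ^ n : ℤ) ≤ y ∧ y ≤ 2 ^ n - 1 then 1 else 0)
      else if n = 0 then 0
      else
        let φ1 : ℤ := if 0 < x then 1 else -1
        let φ2 : ℤ := if 0 ≤ y then 1 else -1
        let a : ℤ := x - φ1 * 2 ^ (n - 1)
        let b : ℤ := y - φ2 * 2 ^ (n - 1)
        φ1 * φ2 * vPF n (if 0 < x then a else -a) (if 0 ≤ y then b else -b - 1)

/-- Signs of horizontal creases of `S_2(n)`: `hPF n x y` is the sign of the
crease on the horizontal unit edge `[x, x+1] × {y}`. -/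
def hPF : ℕ → ℤ → ℤ → ℤ
  | 0, _, _ => 0
  | n + 1, x, y =>
      if y = 0 then
        (if 0 ≤ x ∧ x ≤ 2 ^ n - 1 then 1
         else if -(2 ^ n : ℤ) ≤ x ∧ x ≤ -1 then -1 else 0)
      else if n = 0 then 0
      else
        let φ1 : ℤ := if 0 ≤ x then 1 else -1
        let φ2 : ℤ := if 0 < y then 1 else -1
        let a : ℤ := x - φ1 * 2 ^ (n - 1)
        let b : ℤ := y - φ2 * 2 ^ (n - 1)
        φ1 * φ2 * hPF n (if 0 ≤ x then a else -a - 1) (if 0 < y then b else -b)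

/-!
Both crease functions have closed forms that do not depend on the generation. Writing
`x = 2^k (2a + 1)`, the vertical crease on `{x} × [y, y+1]` is `(-1)^(a + ⌊y / 2^(k+1)⌋)`
(and `+1` on the axis `x = 0`); writing `y = 2^k (2b + 1)`, the horizontal crease on
`[x, x+1] × {y}` is `(-1)^(b + ⌊x / 2^k⌋)` (and the sign of `x + 1/2` on the axis `y = 0`),
except that generation `n + 1` reverses the two rows `y = ±2^(n-1)`. Both follow by induction
on `n` from the quadrant rule: after folding a quadrant onto the first one, the shift by
`2^(n-1)` does not change the relevant parities.

In the closed forms the cell `(x, y)` lies in the cell `(⌊x/2⌋, ⌊y/2⌋)` of the previous level,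
a crease on an even line is inherited from that parent cell, and a crease on an odd line only
depends on the parities of the parent's coordinates. This is exactly how `ν2` rewrites a
letter, so `ν2^n(Σ)` is read off by induction on `n`.
-/

def signIf (p : Prop) [Decidable p] : ℤ := if p then 1 else -1

lemma signIf_ne_zero (p : Prop) [Decidable p] : signIf p ≠ 0 := by
  unfold signIf; split_ifs <;> simp

lemma signIf_even_congr {s t : ℤ} (h : s % 2 = t % 2) : signIf (Even s) = signIf (Even t) := by
  unfold signIf; simp only [Int.even_iff]; split_ifs <;> omega

lemma signIf_even_eq_neg {s t : ℤ} (h : s % 2 ≠ t % 2) :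
    signIf (Even s) = -signIf (Even t) := by
  unfold signIf; simp only [Int.even_iff]; split_ifs <;> omega

/-- Edge indices under the reflection `s ↦ -s`: `[t, t+1]` is the mirror image of `[-t-1, -t]`. -/
def foldNeg (t : ℤ) : ℤ := if 0 ≤ t then t else -t - 1

lemma foldNeg_nonneg (t : ℤ) : 0 ≤ foldNeg t := by
  unfold foldNeg; split_ifs <;> omega

lemma foldNeg_lt {t c : ℤ} (h0 : -c ≤ t) (h : t < c) : foldNeg t < c := by
  unfold foldNeg; split_ifs <;> omega

lemma not_two_pow_dvd_of_lt {m : ℕ} {t : ℤ} (h0 : 0 < t) (h1 : t < 2 ^ (m + 1))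
    (hne : t ≠ 2 ^ m) : ¬ 2 ^ m ∣ t := by
  rintro ⟨c, rfl⟩
  have hpos : (0 : ℤ) < 2 ^ m := by positivity
  have hc0 : 0 < c := pos_of_mul_pos_right h0 hpos.le
  have hc2 : c < 2 := lt_of_mul_lt_mul_left (by rw [pow_succ] at h1; linarith) hpos.le
  exact hne (by rw [show c = 1 by omega, mul_one])

lemma two_pow_dvd_two_mul_iff {m : ℕ} {y : ℤ} (h0 : 0 < y) (h1 : y < 2 ^ (m + 1))
    (hne : y ≠ 2 ^ m) : 2 ^ m ∣ 2 * y ↔ 2 * |y - 2 ^ m| = 2 ^ m := by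
  have hpos : (0 : ℤ) < 2 ^ m := by positivity
  have hpow : (2 : ℤ) ^ (m + 1) = 2 * 2 ^ m := pow_succ' 2 m
  constructor
  · rintro ⟨c, hc⟩
    have hc0 : 0 < c := pos_of_mul_pos_right (show 0 < 2 ^ m * c by omega) hpos.le
    have hc4 : c < 4 := lt_of_mul_lt_mul_left (show 2 ^ m * c < 2 ^ m * 4 by omega) hpos.le
    interval_cases c <;> rcases abs_cases (y - 2 ^ m) with h | h <;> omega
  · intro h
    rcases abs_cases (y - 2 ^ m) with h' | h'
    · exact ⟨3, by omega⟩
    · exact ⟨1, by omega⟩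

def creaseV (x y : ℤ) : ℤ :=
  if x = 0 then 1
  else if x % 2 = 1 then signIf (Even (x / 2 + y / 2))
  else creaseV (x / 2) (y / 2)
termination_by x.natAbs
decreasing_by omega

lemma creaseV_zero_left (y : ℤ) : creaseV 0 y = 1 := by
  rw [creaseV, if_pos rfl]

lemma creaseV_eq_ite (x y : ℤ) : creaseV x y =
    if x % 2 = 1 then signIf (Even (x / 2 + y / 2)) else creaseV (x / 2) (y / 2) := by
  rw [creaseV]
  split_ifs with h0 h1 <;> simp_all [creaseV_zero_left]

lemma creaseV_two_mul_add_one (a y : ℤ) : creaseV (2 * a + 1) y = signIf (Even (a + y / 2)) := by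
  rw [creaseV_eq_ite, if_pos (by omega), show (2 * a + 1) / 2 = a by omega]

lemma creaseV_two_mul (a y : ℤ) : creaseV (2 * a) y = creaseV a (y / 2) := by
  rw [creaseV_eq_ite, if_neg (by omega), show 2 * a / 2 = a by omega]

lemma creaseV_ne_zero (x y : ℤ) : creaseV x y ≠ 0 := by
  fun_induction creaseV x y with
  | case1 => simp
  | case2 => exact signIf_ne_zero _
  | case3 x y _ _ ih => exact ih

lemma creaseV_neg_left {x : ℤ} (y : ℤ) (hx : x ≠ 0) : creaseV (-x) y = -creaseV x y := by
  fun_induction creaseV x y with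
  | case1 => exact absurd rfl hx
  | case2 x y _ hodd =>
    rw [creaseV_eq_ite, if_pos (by omega)]
    exact signIf_even_eq_neg (by omega)
  | case3 x y _ heven ih =>
    rw [creaseV_eq_ite, if_neg (by omega), show -x / 2 = -(x / 2) by omega, ih (by omega)]

lemma creaseV_neg_sub_one_right {x : ℤ} (y : ℤ) (hx : x ≠ 0) :
    creaseV x (-y - 1) = -creaseV x y := by
  fun_induction creaseV x y with
  | case1 => exact absurd rfl hx
  | case2 x y _ hodd =>
    rw [creaseV_eq_ite, if_pos hodd]
    exact signIf_even_eq_neg (by omega)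
  | case3 x y _ heven ih =>
    rw [creaseV_eq_ite, if_neg heven, show (-y - 1) / 2 = -(y / 2) - 1 by omega, ih (by omega)]

lemma creaseV_eq_signIf_mul {x : ℤ} (y : ℤ) (hx : x ≠ 0) :
    creaseV x y = signIf (0 < x) * signIf (0 ≤ y) * creaseV |x| (foldNeg y) := by
  unfold signIf foldNeg
  rcases lt_or_gt_of_ne hx with hx | hx <;> by_cases hy : 0 ≤ y
  · simp [hx, hy, abs_of_neg, not_lt_of_gt hx, creaseV_neg_left y hx.ne]
  · simp [hx, hy, abs_of_neg, not_lt_of_gt hx, creaseV_neg_sub_one_right y (neg_ne_zero.2 hx.ne),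
      creaseV_neg_left y hx.ne]
  · simp [hx, hy, abs_of_pos]
  · simp [hx, hy, abs_of_pos, creaseV_neg_sub_one_right _ hx.ne']

lemma creaseV_sub_two_pow (M : ℕ) {x : ℤ} (y : ℤ) (hx : ¬ 2 ^ M ∣ x) :
    creaseV (x - 2 ^ M) (y - 2 ^ M) = creaseV x y := by
  induction M generalizing x y with
  | zero => simp at hx
  | succ M ih =>
    have hpow : (2 : ℤ) ^ (M + 1) = 2 * 2 ^ M := pow_succ' 2 M
    rw [creaseV_eq_ite, creaseV_eq_ite x, hpow]
    by_cases hodd : x % 2 = 1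
    · rw [if_pos (by omega), if_pos hodd]
      exact signIf_even_congr (by omega)
    · rw [if_neg (by omega), if_neg hodd, show (x - 2 * 2 ^ M) / 2 = x / 2 - 2 ^ M by omega,
        show (y - 2 * 2 ^ M) / 2 = y / 2 - 2 ^ M by omega]
      refine ih _ fun hdvd => hx ?_
      rw [hpow, show x = 2 * (x / 2) by omega]
      exact mul_dvd_mul_left 2 hdvd

lemma creaseV_two_pow (M : ℕ) {y : ℤ} (hy0 : 0 ≤ y) (hy : y < 2 ^ (M + 1)) :
    creaseV (2 ^ M) y = 1 := by
  induction M generalizing y with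
  | zero =>
    rw [pow_zero, show (1 : ℤ) = 2 * 0 + 1 by norm_num, creaseV_two_mul_add_one]
    simp [signIf, show y / 2 = 0 by omega]
  | succ M ih =>
    rw [pow_succ', creaseV_two_mul]
    exact ih (by omega) (by rw [pow_succ] at hy; omega)

lemma creaseV_sub_two_pow_of_lt (m : ℕ) {x y : ℤ} (hx0 : 0 < x) (hx : x < 2 ^ (m + 1))
    (hy0 : 0 ≤ y) (hy : y < 2 ^ (m + 1)) : creaseV (x - 2 ^ m) (y - 2 ^ m) = creaseV x y := by
  by_cases hxm : x = 2 ^ m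
  · rw [hxm, sub_self, creaseV_zero_left, creaseV_two_pow m hy0 hy]
  · exact creaseV_sub_two_pow m y (not_two_pow_dvd_of_lt hx0 hx hxm)

def creaseH (x y : ℤ) : ℤ :=
  if y = 0 then signIf (0 ≤ x)
  else if y % 2 = 1 then signIf (Even (y / 2 + x))
  else creaseH (x / 2) (y / 2)
termination_by y.natAbs
decreasing_by omega

lemma creaseH_zero_right (x : ℤ) : creaseH x 0 = signIf (0 ≤ x) := by
  rw [creaseH, if_pos rfl]

lemma creaseH_eq_ite (x y : ℤ) : creaseH x y =
    if y % 2 = 1 then signIf (Even (y / 2 + x)) else creaseH (x / 2) (y / 2) := by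
  rw [creaseH]
  split_ifs with h0 h1 <;> simp_all [creaseH_zero_right, signIf]
  omega

lemma creaseH_two_mul_add_one (x b : ℤ) : creaseH x (2 * b + 1) = signIf (Even (b + x)) := by
  rw [creaseH_eq_ite, if_pos (by omega), show (2 * b + 1) / 2 = b by omega]

lemma creaseH_two_mul (x b : ℤ) : creaseH x (2 * b) = creaseH (x / 2) b := by
  rw [creaseH_eq_ite, if_neg (by omega), show 2 * b / 2 = b by omega]

lemma creaseH_ne_zero (x y : ℤ) : creaseH x y ≠ 0 := by
  fun_induction creaseH x y with
  | case1 => exact signIf_ne_zero _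
  | case2 => exact signIf_ne_zero _
  | case3 x y _ _ ih => exact ih

lemma creaseH_neg_right (x : ℤ) {y : ℤ} (hy : y ≠ 0) : creaseH x (-y) = -creaseH x y := by
  fun_induction creaseH x y with
  | case1 => exact absurd rfl hy
  | case2 x y _ hodd =>
    rw [creaseH_eq_ite, if_pos (by omega)]
    exact signIf_even_eq_neg (by omega)
  | case3 x y _ heven ih =>
    rw [creaseH_eq_ite, if_neg (by omega), show -y / 2 = -(y / 2) by omega, ih (by omega)]

lemma creaseH_neg_sub_one_left (x y : ℤ) : creaseH (-x - 1) y = -creaseH x y := by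
  fun_induction creaseH x y with
  | case1 x =>
    simp only [creaseH_zero_right, signIf]
    split_ifs <;> omega
  | case2 x y _ hodd =>
    rw [creaseH_eq_ite, if_pos hodd]
    exact signIf_even_eq_neg (by omega)
  | case3 x y _ heven ih =>
    rw [creaseH_eq_ite, if_neg heven, show (-x - 1) / 2 = -(x / 2) - 1 by omega, ih]

lemma creaseH_eq_signIf_mul (x : ℤ) {y : ℤ} (hy : y ≠ 0) :
    creaseH x y = signIf (0 ≤ x) * signIf (0 < y) * creaseH (foldNeg x) |y| := by
  unfold signIf foldNeg
  rcases lt_or_gt_of_ne hy with hy | hy <;> by_cases hx : 0 ≤ x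
  · simp [hx, hy, abs_of_neg, not_lt_of_gt hy, creaseH_neg_right x hy.ne]
  · simp [hx, hy, abs_of_neg, not_lt_of_gt hy, creaseH_neg_sub_one_left,
      creaseH_neg_right x hy.ne]
  · simp [hx, hy, abs_of_pos]
  · simp [hx, hy, abs_of_pos, creaseH_neg_sub_one_left]

lemma creaseH_sub_two_pow (M : ℕ) (x : ℤ) {y : ℤ} (hy : ¬ 2 ^ M ∣ y) :
    creaseH (x - 2 ^ M) (y - 2 ^ M) = if 2 ^ M ∣ 2 * y then -creaseH x y else creaseH x y := by
  induction M generalizing x y with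
  | zero => simp at hy
  | succ M ih =>
    have hpow : (2 : ℤ) ^ (M + 1) = 2 * 2 ^ M := pow_succ' 2 M
    rw [creaseH_eq_ite, creaseH_eq_ite x]
    by_cases hodd : y % 2 = 1
    · rw [if_pos (by omega), if_pos hodd]
      rcases M with _ | k
      · rw [if_pos (by simp)]
        exact signIf_even_eq_neg (by omega)
      · have h4 : (4 : ℤ) ∣ 2 ^ (k + 1 + 1) := ⟨2 ^ k, by ring⟩
        rw [if_neg fun h => by have := h4.trans h; omega]
        exact signIf_even_congr (by rw [hpow, pow_succ]; omega)
    · rw [if_neg (by omega), if_neg hodd, hpow, show (x - 2 * 2 ^ M) / 2 = x / 2 - 2 ^ M by omega,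
        show (y - 2 * 2 ^ M) / 2 = y / 2 - 2 ^ M by omega]
      have hy2 : y = 2 * (y / 2) := by omega
      rw [ih _ fun h => hy (by rw [hpow, hy2]; exact mul_dvd_mul_left 2 h)]
      have hdvd : 2 * 2 ^ M ∣ 2 * y ↔ 2 ^ M ∣ 2 * (y / 2) := by
        rw [mul_dvd_mul_iff_left two_ne_zero, ← hy2]
      simp only [hdvd]

lemma creaseH_two_pow (M : ℕ) {x : ℤ} (hx0 : 0 ≤ x) (hx : x < 2 ^ (M + 1)) :
    creaseH x (2 ^ M) = signIf (x < 2 ^ M) := by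
  induction M generalizing x with
  | zero =>
    rw [pow_zero, show (1 : ℤ) = 2 * 0 + 1 by norm_num, creaseH_two_mul_add_one]
    unfold signIf
    split_ifs with h1 h2 h2 <;> simp only [Int.even_iff] at h1 <;> omega
  | succ M ih =>
    rw [pow_succ', creaseH_two_mul, ih (by omega) (by rw [pow_succ] at hx; omega)]
    unfold signIf
    split_ifs <;> omega

/-- The horizontal creases of generation `n + 1`: those of `creaseH` with the rows `y = ±2^(n-1)`
reversed (for `n = 0` there is no such row). -/
def creaseHAt (n : ℕ) (x y : ℤ) : ℤ := if 2 * |y| = 2 ^ n then -creaseH x y else creaseH x y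

lemma creaseHAt_zero_right (n : ℕ) (x : ℤ) : creaseHAt n x 0 = signIf (0 ≤ x) := by
  have hpos : (0 : ℤ) < 2 ^ n := by positivity
  rw [creaseHAt, abs_zero, if_neg (by omega), creaseH_zero_right]

lemma creaseHAt_ne_zero (n : ℕ) (x y : ℤ) : creaseHAt n x y ≠ 0 := by
  unfold creaseHAt
  split_ifs
  · exact neg_ne_zero.2 (creaseH_ne_zero x y)
  · exact creaseH_ne_zero x y

lemma creaseHAt_eq_signIf_mul (n : ℕ) (x : ℤ) {y : ℤ} (hy : y ≠ 0) :
    creaseHAt n x y = signIf (0 ≤ x) * signIf (0 < y) * creaseHAt n (foldNeg x) |y| := by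
  unfold creaseHAt
  rw [abs_abs, creaseH_eq_signIf_mul x hy]
  split_ifs <;> ring

lemma creaseHAt_succ_succ_eq_ite (n : ℕ) (x y : ℤ) : creaseHAt (n + 2) x y =
    if y % 2 = 1 then signIf (Even (y / 2 + x)) else creaseHAt (n + 1) (x / 2) (y / 2) := by
  have hpow : (2 : ℤ) ^ (n + 2) = 2 * 2 ^ (n + 1) := pow_succ' 2 (n + 1)
  have hpow' : (2 : ℤ) ^ (n + 1) = 2 * 2 ^ n := pow_succ' 2 n
  unfold creaseHAt
  rw [creaseH_eq_ite]
  by_cases hodd : y % 2 = 1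
  · rw [if_pos hodd, if_pos hodd, if_neg (by rcases abs_cases y with h | h <;> omega)]
  · rw [if_neg hodd, if_neg hodd]
    have hflip : 2 * |y| = 2 ^ (n + 2) ↔ 2 * |y / 2| = 2 ^ (n + 1) := by
      rcases abs_cases y with h | h <;> rcases abs_cases (y / 2) with h' | h' <;> omega
    simp only [hflip]

lemma creaseHAt_sub_two_pow_of_lt (m : ℕ) {x y : ℤ} (hx0 : 0 ≤ x) (hx : x < 2 ^ (m + 1))
    (hy0 : 0 < y) (hy : y < 2 ^ (m + 1)) :
    creaseHAt m (x - 2 ^ m) (y - 2 ^ m) = creaseHAt (m + 1) x y := by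
  have hpow : (2 : ℤ) ^ (m + 1) = 2 * 2 ^ m := pow_succ' 2 m
  unfold creaseHAt
  rw [abs_of_pos hy0]
  by_cases hym : y = 2 ^ m
  · have hpos : (0 : ℤ) < 2 ^ m := by positivity
    subst hym
    rw [sub_self, abs_zero, if_neg (by omega), if_pos hpow.symm, creaseH_zero_right,
      creaseH_two_pow m hx0 hx]
    unfold signIf
    split_ifs <;> omega
  · rw [creaseH_sub_two_pow m x (not_two_pow_dvd_of_lt hy0 hy hym),
      if_neg (show ¬ 2 * y = 2 ^ (m + 1) by omega)]
    simp only [← two_pow_dvd_two_mul_iff hy0 hy hym]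
    split_ifs <;> simp

lemma vPF_succ_zero_left (n : ℕ) {y : ℤ} (hy0 : -2 ^ n ≤ y) (hy : y < 2 ^ n) :
    vPF (n + 1) 0 y = 1 := by
  rw [vPF, if_pos rfl, if_pos ⟨hy0, by omega⟩]

lemma vPF_succ_succ_of_ne_zero (n : ℕ) {x : ℤ} (y : ℤ) (hx : x ≠ 0) :
    vPF (n + 2) x y =
      signIf (0 < x) * signIf (0 ≤ y) * vPF (n + 1) (|x| - 2 ^ n) (foldNeg y - 2 ^ n) := by
  rw [vPF]
  simp only [if_neg hx, add_tsub_cancel_right, signIf, foldNeg]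
  rcases lt_or_gt_of_ne hx with hx | hx <;> by_cases hy : 0 ≤ y <;>
    simp [hx, hy, not_lt_of_gt, abs_of_neg, abs_of_pos] <;> ring_nf

lemma hPF_succ_zero_right (n : ℕ) {x : ℤ} (hx0 : -2 ^ n ≤ x) (hx : x < 2 ^ n) :
    hPF (n + 1) x 0 = signIf (0 ≤ x) := by
  rw [hPF, if_pos rfl, signIf]
  split_ifs <;> omega

lemma hPF_succ_succ_of_ne_zero (n : ℕ) (x : ℤ) {y : ℤ} (hy : y ≠ 0) :
    hPF (n + 2) x y =
      signIf (0 ≤ x) * signIf (0 < y) * hPF (n + 1) (foldNeg x - 2 ^ n) (|y| - 2 ^ n) := by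
  rw [hPF]
  simp only [if_neg hy, add_tsub_cancel_right, signIf, foldNeg]
  rcases lt_or_gt_of_ne hy with hy | hy <;> by_cases hx : 0 ≤ x <;>
    simp [hx, hy, not_lt_of_gt, abs_of_neg, abs_of_pos] <;> ring_nf

theorem vPF_succ_eq_creaseV (n : ℕ) {x y : ℤ} (hx : |x| < 2 ^ n) (hy0 : -2 ^ n ≤ y)
    (hy : y < 2 ^ n) : vPF (n + 1) x y = creaseV x y := by
  induction n generalizing x y with
  | zero =>
    rw [pow_zero, Int.abs_lt_one_iff] at hx
    rw [hx, vPF_succ_zero_left 0 hy0 hy, creaseV_zero_left]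
  | succ m ih =>
    obtain rfl | hx0 := eq_or_ne x 0
    · rw [vPF_succ_zero_left _ hy0 hy, creaseV_zero_left]
    have hpow : (2 : ℤ) ^ (m + 1) = 2 * 2 ^ m := pow_succ' 2 m
    have hxpos : 0 < |x| := abs_pos.2 hx0
    have hfold := foldNeg_lt hy0 hy
    rw [vPF_succ_succ_of_ne_zero m y hx0,
      ih (abs_lt.2 ⟨by omega, by omega⟩) (by linarith [foldNeg_nonneg y]) (by omega),
      creaseV_sub_two_pow_of_lt m hxpos hx (foldNeg_nonneg y) hfold,
      ← creaseV_eq_signIf_mul y hx0]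

theorem hPF_succ_eq_creaseHAt (n : ℕ) {x y : ℤ} (hx0 : -2 ^ n ≤ x) (hx : x < 2 ^ n)
    (hy : |y| < 2 ^ n) : hPF (n + 1) x y = creaseHAt n x y := by
  induction n generalizing x y with
  | zero =>
    rw [pow_zero, Int.abs_lt_one_iff] at hy
    rw [hy, hPF_succ_zero_right 0 hx0 hx, creaseHAt_zero_right]
  | succ m ih =>
    obtain rfl | hy0 := eq_or_ne y 0
    · rw [hPF_succ_zero_right _ hx0 hx, creaseHAt_zero_right]
    have hpow : (2 : ℤ) ^ (m + 1) = 2 * 2 ^ m := pow_succ' 2 m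
    have hypos : 0 < |y| := abs_pos.2 hy0
    have hfold := foldNeg_lt hx0 hx
    rw [hPF_succ_succ_of_ne_zero m x hy0,
      ih (by linarith [foldNeg_nonneg x]) (by omega) (abs_lt.2 ⟨by omega, by omega⟩),
      creaseHAt_sub_two_pow_of_lt m (foldNeg_nonneg x) hfold hypos hy,
      ← creaseHAt_eq_signIf_mul (m + 1) x hy0]

def pfLetter (v h x y : ℤ) : PFB :=
  (((if v = -1 then 2 else 0) + (if h = -1 then 1 else 0) : Fin 4),
   (if Even x then (if Even y then (0 : Fin 4) else 1) else (if Even y then 2 else 3)))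

lemma nu2_pfLetter (v h x y : ℤ) :
    nu2 (pfLetter v h (x / 2) (y / 2)) (x % 2 == 1) (y % 2 == 1) =
      pfLetter (if x % 2 = 1 then signIf (Even (x / 2 + y / 2)) else v)
        (if y % 2 = 1 then signIf (Even (y / 2 + x)) else h) x y := by
  obtain ⟨a, rfl | rfl⟩ := Int.even_or_odd' x <;>
    obtain ⟨b, rfl | rfl⟩ := Int.even_or_odd' y <;>
    by_cases ha : Even a <;> by_cases hb : Even b <;>
    by_cases hv : v = -1 <;> by_cases hh : h = -1 <;>
    simp [pfLetter, nu2, ent, signIf, ha, hb, hv, hh, parity_simps, ← Int.not_even_iff_odd,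
      Int.add_ediv_of_dvd_left]

lemma seedIter_succ (n X Y : ℕ) :
    seedIter (n + 1) X Y = nu2 (seedIter n (X / 2) (Y / 2)) (X % 2 == 1) (Y % 2 == 1) := by
  have hpow : 2 ^ (n + 1) = 2 * 2 ^ n := pow_succ' 2 n
  simp only [seedIter, nu2Iter, hpow, Nat.mod_mul_right_div_self, Nat.div_div_eq_div_mul,
    Nat.mod_mul_right_mod]

theorem seedIter_eq_pfLetter (n : ℕ) {x y : ℤ} (hx0 : -2 ^ n ≤ x) (hx : x < 2 ^ n)
    (hy0 : -2 ^ n ≤ y) (hy : y < 2 ^ n) :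
    seedIter n (x + 2 ^ n).toNat (y + 2 ^ n).toNat =
      pfLetter (creaseV x y) (creaseHAt (n + 1) x y) x y := by
  induction n generalizing x y with
  | zero =>
    have hv (t : ℤ) : creaseV (-1) t = signIf (Even (-1 + t / 2)) := by
      simpa using creaseV_two_mul_add_one (-1) t
    have hh (t : ℤ) : creaseH t (-1) = signIf (Even (-1 + t)) := by
      simpa using creaseH_two_mul_add_one t (-1)
    norm_num at hx0 hx hy0 hy
    interval_cases x <;> interval_cases y <;>
      simp [seedIter, nu2Iter, pfSeed, pfLetter, creaseHAt, hv, hh, creaseV_zero_left,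
        creaseH_zero_right, signIf]
  | succ n ih =>
    have hpow : (2 : ℤ) ^ (n + 1) = 2 * 2 ^ n := pow_succ' 2 n
    have hdiv (t : ℤ) : (t + 2 ^ (n + 1)).toNat / 2 = (t / 2 + 2 ^ n).toNat := by
      rw [hpow]; omega
    have hmod (t : ℤ) (ht : -2 ^ (n + 1) ≤ t) :
        ((t + 2 ^ (n + 1)).toNat % 2 == 1) = (t % 2 == 1) := by
      rw [Bool.eq_iff_iff, beq_iff_eq, beq_iff_eq, hpow]; omega
    rw [seedIter_succ, hdiv, hdiv, hmod x hx0, hmod y hy0,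
      ih (by omega) (by omega) (by omega) (by omega), nu2_pfLetter, ← creaseV_eq_ite,
      ← creaseHAt_succ_succ_eq_ite]

/-- `ν2` generates the 2-dimensional paperfolding structures: for `n ≥ 0` and
`−2^n ≤ x, y < 2^n`, the creases `v_{n+2}(x,y)` and `h_{n+2}(x,y)` are nonzero
and the entry of `ν2^n(Σ)` at position `(x + 2^n, y + 2^n)` is `b_{ij}` with
`i = 2u + w` (`u = 1` iff `v_{n+2}(x,y) = −1`, `w = 1` iff `h_{n+2}(x,y) = −1`)
and `j ∈ {0,1,2,3}` recording the parities of `(x, y)`. -/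
theorem stmt12 (n : ℕ) (x y : ℤ)
    (hx1 : -(2 ^ n) ≤ x) (hx2 : x < 2 ^ n)
    (hy1 : -(2 ^ n) ≤ y) (hy2 : y < 2 ^ n) :
    vPF (n + 2) x y ≠ 0 ∧ hPF (n + 2) x y ≠ 0 ∧
      seedIter n (x + 2 ^ n).toNat (y + 2 ^ n).toNat =
        (((if vPF (n + 2) x y = -1 then 2 else 0) +
            (if hPF (n + 2) x y = -1 then 1 else 0) : Fin 4),
         (if Even x then (if Even y then (0 : Fin 4) else 1)
          else (if Even y then 2 else 3))) := by
  have hpow : (2 : ℤ) ^ (n + 1) = 2 * 2 ^ n := pow_succ' 2 n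
  have hv : vPF (n + 2) x y = creaseV x y :=
    vPF_succ_eq_creaseV (n + 1) (abs_lt.2 ⟨by omega, by omega⟩) (by omega) (by omega)
  have hh : hPF (n + 2) x y = creaseHAt (n + 1) x y :=
    hPF_succ_eq_creaseHAt (n + 1) (by omega) (by omega) (abs_lt.2 ⟨by omega, by omega⟩)
  rw [hv, hh]
  exact ⟨creaseV_ne_zero x y, creaseHAt_ne_zero (n + 1) x y,
    seedIter_eq_pfLetter n hx1 hx2 hy1 hy2⟩
end

section
/- Let S(n) be the 1-dimensional paperfolding patterns. Then: (a) for every n ≥ 1 and every integer x with |x| < 2^(n−1), the crease of S(n+1) at position 2x equals the crease of S(n) at position x; and (b) for every n ≥ 2 and every integer x with −2^(n−1) ≤ x < 2^(n−1), the crease of S(n+1) at position 2x+1 equals −1 if x is even and +1 if x is odd. -/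
/-- Reflection of a word of creases: reverse and negate every sign. -/
def rPF (w : List ℤ) : List ℤ := (w.map (fun s => -s)).reverse

/-- The 1-dimensional paperfolding patterns: `S(0) = []` and
`S(n+1) = r(S(n)) ++ [+1] ++ S(n)`; `S(n)` has length `2^n − 1` and its entry
at 0-based index `m` is the crease sign at integer position
`x = m − 2^(n−1) + 1`. -/
def SPF : ℕ → List ℤ
  | 0 => []
  | n + 1 => rPF (SPF n) ++ [1] ++ SPF n

/-!
Unfolding once more interleaves the old pattern with a new one: in `S(n+1)` the entry at odd
index `2i+1` is the entry of `S(n)` at index `i`, and for `n ≥ 1` the entry at even index `2i` is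
`-1` or `+1` according as `i` is even or odd. Both follow by induction from the recursion, because
reflection sends index `j` of a word of odd length `L` to `L - 1 - j`, which has the parity of `j`;
for the even indices it also flips the parity of `i`, and this compensates the sign change.
-/

theorem length_rPF (w : List ℤ) : (rPF w).length = w.length := by
  simp [rPF]

theorem getElem?_rPF {w : List ℤ} {j : ℕ} (hj : j < w.length) :
    (rPF w)[j]? = w[w.length - 1 - j]?.map Neg.neg := by
  rw [rPF, List.getElem?_reverse (by simpa using hj), List.getElem?_map, List.length_map]

theorem length_SPF (n : ℕ) : (SPF n).length = 2 ^ n - 1 := by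
  induction n with
  | zero => rfl
  | succ n ih =>
    simp only [SPF, List.length_append, length_rPF, ih, List.length_singleton, pow_succ]
    have : 1 ≤ 2 ^ n := Nat.one_le_two_pow
    omega

theorem getElem?_SPF_succ_of_lt {n j : ℕ} (hj : j < 2 ^ n - 1) :
    (SPF (n + 1))[j]? = (SPF n)[2 ^ n - 2 - j]?.map Neg.neg := by
  rw [SPF, List.append_assoc, List.getElem?_append_left (by rwa [length_rPF, length_SPF]),
    getElem?_rPF (by rwa [length_SPF]), length_SPF]
  rfl

theorem getElem?_SPF_succ_center (n : ℕ) : (SPF (n + 1))[2 ^ n - 1]? = some 1 := by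
  rw [SPF, List.append_assoc, List.getElem?_append_right (by rw [length_rPF, length_SPF]),
    length_rPF, length_SPF, Nat.sub_self]
  rfl

theorem getElem?_SPF_succ_of_le {n j : ℕ} (hj : 2 ^ n ≤ j) :
    (SPF (n + 1))[j]? = (SPF n)[j - 2 ^ n]? := by
  have : 1 ≤ 2 ^ n := Nat.one_le_two_pow
  rw [SPF, List.getElem?_append_right (by simp [length_rPF, length_SPF]; omega)]
  simp only [List.length_append, length_rPF, length_SPF, List.length_cons, List.length_nil,
    zero_add]
  congr 1
  omega

theorem getElem?_SPF_succ_two_mul_add_one (n i : ℕ) :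
    (SPF (n + 1))[2 * i + 1]? = (SPF n)[i]? := by
  induction n generalizing i with
  | zero => simp [SPF, rPF]
  | succ n ih =>
    have hpow : 2 ^ (n + 1) = 2 * 2 ^ n := by ring
    have : 1 ≤ 2 ^ n := Nat.one_le_two_pow
    rcases lt_trichotomy i (2 ^ n - 1) with hi | rfl | hi
    · rw [getElem?_SPF_succ_of_lt (by omega), getElem?_SPF_succ_of_lt hi,
        show 2 ^ (n + 1) - 2 - (2 * i + 1) = 2 * (2 ^ n - 2 - i) + 1 by omega, ih]
    · rw [show 2 * (2 ^ n - 1) + 1 = 2 ^ (n + 1) - 1 by omega, getElem?_SPF_succ_center,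
        getElem?_SPF_succ_center]
    · rw [getElem?_SPF_succ_of_le (n := n + 1) (by omega),
        getElem?_SPF_succ_of_le (j := i) (by omega),
        show 2 * i + 1 - 2 ^ (n + 1) = 2 * (i - 2 ^ n) + 1 by omega, ih]

theorem getElem?_SPF_succ_two_mul {n i : ℕ} (hn : 1 ≤ n) (hi : i < 2 ^ n) :
    (SPF (n + 1))[2 * i]? = some (if Even i then -1 else 1) := by
  induction n, hn using Nat.le_induction generalizing i with
  | base => interval_cases i <;> decide
  | succ n hn ih =>
    have hpow : 2 ^ (n + 1) = 2 * 2 ^ n := by ring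
    have heven : Even (2 ^ n) := even_two.pow_of_ne_zero (by omega)
    rcases lt_or_ge i (2 ^ n) with hi' | hi'
    · rw [getElem?_SPF_succ_of_lt (by omega),
        show 2 ^ (n + 1) - 2 - 2 * i = 2 * (2 ^ n - 1 - i) by omega, ih (by omega)]
      have : Even (2 ^ n - 1 - i) ↔ ¬Even i := by
        rw [Nat.even_sub (by omega), Nat.even_sub (by omega)]
        simp [heven, Nat.not_even_one]
      by_cases h : Even i <;> simp [h, this]
    · rw [getElem?_SPF_succ_of_le (by omega), show 2 * i - 2 ^ (n + 1) = 2 * (i - 2 ^ n) by omega,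
        ih (by omega)]
      simp [Nat.even_sub hi', heven]

/-- (a) For `n ≥ 1` and `|x| < 2^(n−1)`, the crease of `S(n+1)` at position
`2x` equals the crease of `S(n)` at position `x`; (b) for `n ≥ 2` and
`−2^(n−1) ≤ x < 2^(n−1)`, the crease of `S(n+1)` at position `2x + 1` is `−1`
if `x` is even and `+1` if `x` is odd.  (The crease of `S(m)` at position `p`
is the entry of the word `S(m)` at 0-based index `p + 2^(m−1) − 1`.) -/
theorem stmt13 :
    (∀ n : ℕ, 1 ≤ n → ∀ x : ℤ, |x| < 2 ^ (n - 1) →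
      (SPF (n + 1))[(2 * x + 2 ^ n - 1).toNat]? =
        (SPF n)[(x + 2 ^ (n - 1) - 1).toNat]?) ∧
    (∀ n : ℕ, 2 ≤ n → ∀ x : ℤ, -(2 ^ (n - 1)) ≤ x → x < 2 ^ (n - 1) →
      (SPF (n + 1))[(2 * x + 1 + 2 ^ n - 1).toNat]? =
        some (if Even x then -1 else 1)) := by
  refine ⟨fun n hn x hx => ?_, fun n hn x hx₁ hx₂ => ?_⟩
  -- position `p` of `S(m)` is index `p + 2^(m-1) - 1`: with `i = x + 2^(n-1)`, positions `2x`
  -- and `2x + 1` of `S(n+1)` are indices `2i - 1` and `2i`, and position `x` of `S(n)` is `i - 1`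
  · have hpow : (2 : ℤ) ^ n = 2 * 2 ^ (n - 1) := by rw [← pow_succ', Nat.sub_add_cancel hn]
    rw [abs_lt] at hx
    rw [show (2 * x + 2 ^ n - 1).toNat = 2 * (x + 2 ^ (n - 1) - 1).toNat + 1 by omega,
      getElem?_SPF_succ_two_mul_add_one]
  · have hpow : (2 : ℤ) ^ n = 2 * 2 ^ (n - 1) := by
      rw [← pow_succ', Nat.sub_add_cancel (by omega)]
    set i := (x + 2 ^ (n - 1)).toNat
    have hix : (i : ℤ) = x + 2 ^ (n - 1) := Int.toNat_of_nonneg (by omega)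
    have hin : i < 2 ^ n := by exact_mod_cast (by omega : (i : ℤ) < 2 ^ n)
    have hparity : Even i ↔ Even x := by
      rw [← Int.even_coe_nat, hix, Int.even_add]
      simp [(even_two : Even (2 : ℤ)).pow_of_ne_zero (show n - 1 ≠ 0 by omega)]
    rw [show (2 * x + 1 + 2 ^ n - 1).toNat = 2 * i by omega,
      getElem?_SPF_succ_two_mul (by omega) hin]
    simp only [hparity]
end

section
/- Let v_n, h_n encode the 2-dimensional paperfolding patterns S_2(n). Then for every n ≥ 2 and all integers (x,y) with −2^(n−1) ≤ x < 2^(n−1) and −2^(n−1) ≤ y < 2^(n−1): (a) (doubling) v_{n+1}(2x, 2y) = v_{n+1}(2x, 2y+1) = v_n(x,y) and h_{n+1}(2x, 2y) = h_{n+1}(2x+1, 2y) = h_n(x,y); and (b) (inserted creases) v_{n+1}(2x+1, 2y) = v_{n+1}(2x+1, 2y+1) = (−1)^(e(x)+e(y)), h_{n+1}(2x, 2y+1) = −(−1)^(e(y)), and h_{n+1}(2x+1, 2y+1) = (−1)^(e(y)), where e(t) = 1 if t is even and e(t) = 0 if t is odd. -/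
/-- `e(t) = 1` if `t` is even, `e(t) = 0` if `t` is odd. -/
def epar (t : ℤ) : ℕ := if Even t then 1 else 0

/-!
Halving a coordinate (floor division by 2) is compatible with the quadrant recursion. Off the
central lines, `vPF (n + 2) x y = ± vPF (n + 1) (|x| - 2^n) (cellFold y - 2^n)`, and symmetrically
for `hPF`. Halving commutes with `|·|` on even points, turns `|·|` into `cellFold` on odd points,
commutes with `cellFold`, and does not see the shift by the even number `2^n`; the signs `±` are
exactly the parity changes made by the two reflections. Hence the refinement identity
`vPF (n + 1) x y = if Even x then vPF n (x / 2) (y / 2) else (-1) ^ (e(x / 2) + e(y / 2))`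
(and its analogue for `hPF`) passes from `n` to `n + 1`, once it is checked by evaluation at
`n = 2`. Allowing the point coordinate on the boundary of the square `|x| ≤ 2^n` makes the
induction closed under the quadrant maps.
-/

namespace Paperfolding

def cellSign (t : ℤ) : ℤ := if 0 ≤ t then 1 else -1

/-- `cellFold t` indexes the mirror image of the unit cell `[t, t + 1]` under `s ↦ -s`. -/
def cellFold (t : ℤ) : ℤ := if 0 ≤ t then t else -t - 1

lemma cellSign_mul_self (t : ℤ) : cellSign t * cellSign t = 1 := by
  unfold cellSign; split_ifs <;> norm_num

lemma cellSign_ediv_two (t : ℤ) : cellSign (t / 2) = cellSign t := by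
  unfold cellSign; split_ifs <;> omega

lemma cellFold_ediv_two (t : ℤ) : cellFold t / 2 = cellFold (t / 2) := by
  unfold cellFold; split_ifs <;> omega

lemma abs_ediv_two_of_even {x : ℤ} (hx : Even x) : |x| / 2 = |x / 2| := by
  obtain ⟨k, rfl⟩ := hx
  rw [← two_mul, Int.mul_ediv_cancel_left _ two_ne_zero, abs_mul]; simp

lemma abs_ediv_two_of_odd {x : ℤ} (hx : Odd x) : |x| / 2 = cellFold (x / 2) := by
  obtain ⟨k, rfl⟩ := hx
  unfold cellFold
  rcases le_or_gt 0 k with h | h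
  · rw [abs_of_nonneg (by omega), if_pos (by omega)]
  · rw [abs_of_neg (by omega), if_neg (by omega)]; omega

lemma neg_one_pow_epar (t : ℤ) : (-1 : ℤ) ^ epar t = if Even t then -1 else 1 := by
  unfold epar; split_ifs <;> norm_num

lemma epar_two_mul (t : ℤ) : epar (2 * t) = 1 := if_pos (even_two_mul t)

lemma epar_two_mul_add_one (t : ℤ) : epar (2 * t + 1) = 0 := if_neg t.not_even_two_mul_add_one

lemma even_sub_two_pow_iff {k : ℕ} (hk : k ≠ 0) (t : ℤ) : Even (t - 2 ^ k) ↔ Even t := by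
  simp [Int.even_sub, (even_two (α := ℤ)).pow_of_ne_zero hk]

lemma epar_sub_two_pow {k : ℕ} (hk : k ≠ 0) (t : ℤ) : epar (t - 2 ^ k) = epar t := by
  simp only [epar, even_sub_two_pow_iff hk]

lemma neg_one_pow_epar_cellFold (t : ℤ) :
    (-1 : ℤ) ^ epar (cellFold t) = cellSign t * (-1) ^ epar t := by
  unfold cellFold cellSign
  split_ifs with h
  · ring
  · have hpar : Even (-t - 1) ↔ ¬Even t := by simp [parity_simps]
    simp only [neg_one_pow_epar, hpar]
    split_ifs <;> norm_num

lemma vPF_add_two_of_ne_zero (n : ℕ) {x : ℤ} (hx : x ≠ 0) (y : ℤ) :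
    vPF (n + 2) x y =
      cellSign x * cellSign y * vPF (n + 1) (|x| - 2 ^ n) (cellFold y - 2 ^ n) := by
  rw [vPF, if_neg hx, if_neg (Nat.succ_ne_zero n)]
  simp only [cellSign, cellFold, Nat.add_sub_cancel]
  rcases lt_or_gt_of_ne hx with h | h
  · rw [abs_of_neg h]
    split_ifs <;> first | omega | ring_nf
  · rw [abs_of_pos h]
    split_ifs <;> first | omega | ring_nf

lemma hPF_add_two_of_ne_zero (n : ℕ) (x : ℤ) {y : ℤ} (hy : y ≠ 0) :
    hPF (n + 2) x y =
      cellSign x * cellSign y * hPF (n + 1) (cellFold x - 2 ^ n) (|y| - 2 ^ n) := by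
  rw [hPF, if_neg hy, if_neg (Nat.succ_ne_zero n)]
  simp only [cellSign, cellFold, Nat.add_sub_cancel]
  rcases lt_or_gt_of_ne hy with h | h
  · rw [abs_of_neg h]
    split_ifs <;> first | omega | ring_nf
  · rw [abs_of_pos h]
    split_ifs <;> first | omega | ring_nf

lemma vPF_succ_zero (n : ℕ) {y : ℤ} (hy1 : -2 ^ n ≤ y) (hy2 : y < 2 ^ n) :
    vPF (n + 1) 0 y = 1 := by
  rw [vPF, if_pos rfl, if_pos (by omega)]

lemma hPF_succ_zero (n : ℕ) {x : ℤ} (hx1 : -2 ^ n ≤ x) (hx2 : x < 2 ^ n) :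
    hPF (n + 1) x 0 = cellSign x := by
  rw [hPF, if_pos rfl, cellSign]
  split_ifs <;> omega

lemma abs_sub_two_pow_le {n : ℕ} {x : ℤ} (hx : |x| ≤ 2 ^ (n + 1)) :
    |(|x| - 2 ^ n)| ≤ 2 ^ n := by
  rw [pow_succ] at hx
  rw [abs_le]
  constructor <;> linarith [abs_nonneg x]

lemma cellFold_sub_two_pow_mem {n : ℕ} {y : ℤ} (hy1 : -2 ^ (n + 1) ≤ y)
    (hy2 : y < 2 ^ (n + 1)) :
    -2 ^ n ≤ cellFold y - 2 ^ n ∧ cellFold y - 2 ^ n < 2 ^ n := by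
  rw [pow_succ] at hy1 hy2
  unfold cellFold
  split_ifs <;> omega

theorem vPF_succ_eq (n : ℕ) (hn : 2 ≤ n) {x y : ℤ} (hx : |x| ≤ 2 ^ n)
    (hy1 : -2 ^ n ≤ y) (hy2 : y < 2 ^ n) :
    vPF (n + 1) x y =
      if Even x then vPF n (x / 2) (y / 2) else (-1) ^ (epar (x / 2) + epar (y / 2)) := by
  induction n, hn using Nat.le_induction generalizing x y with
  | base =>
    obtain ⟨hx1, hx2⟩ := abs_le.mp hx
    norm_num at hx1 hx2 hy1 hy2
    interval_cases x <;> interval_cases y <;> decide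
  | succ n hn ih =>
    obtain ⟨k, rfl⟩ : ∃ k, n = k + 1 := ⟨n - 1, by omega⟩
    rcases eq_or_ne x 0 with rfl | hx0
    · have hpow : (2 : ℤ) ^ (k + 1 + 1) = 2 * 2 ^ (k + 1) := pow_succ' _ _
      rw [vPF_succ_zero _ hy1 hy2, if_pos Even.zero, Int.zero_ediv,
        vPF_succ_zero _ (by omega) (by omega)]
    obtain ⟨hy1', hy2'⟩ := cellFold_sub_two_pow_mem hy1 hy2
    rw [vPF_add_two_of_ne_zero (k + 1) hx0, ih (abs_sub_two_pow_le hx) hy1' hy2']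
    simp only [even_sub_two_pow_iff k.succ_ne_zero, even_abs]
    split_ifs with hxe
    · have hx0' : x / 2 ≠ 0 := by obtain ⟨m, rfl⟩ := hxe; omega
      rw [vPF_add_two_of_ne_zero k hx0', cellSign_ediv_two, cellSign_ediv_two,
        ← abs_ediv_two_of_even hxe, ← cellFold_ediv_two]
      congr 2 <;> rw [pow_succ] <;> omega
    · have hk : k ≠ 0 := by omega
      have hxh : (|x| - 2 ^ (k + 1)) / 2 = cellFold (x / 2) - 2 ^ k := by
        rw [← abs_ediv_two_of_odd (Int.not_even_iff_odd.mp hxe), pow_succ]; omega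
      have hyh : (cellFold y - 2 ^ (k + 1)) / 2 = cellFold (y / 2) - 2 ^ k := by
        rw [← cellFold_ediv_two, pow_succ]; omega
      rw [hxh, hyh, epar_sub_two_pow hk, epar_sub_two_pow hk, pow_add, pow_add,
        neg_one_pow_epar_cellFold, neg_one_pow_epar_cellFold, cellSign_ediv_two, cellSign_ediv_two]
      linear_combination ((-1) ^ epar (x / 2) * (-1) ^ epar (y / 2) * cellSign y * cellSign y) *
        cellSign_mul_self x + ((-1) ^ epar (x / 2) * (-1) ^ epar (y / 2)) * cellSign_mul_self y

theorem hPF_succ_eq (n : ℕ) (hn : 2 ≤ n) {x y : ℤ} (hx1 : -2 ^ n ≤ x) (hx2 : x < 2 ^ n)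
    (hy : |y| ≤ 2 ^ n) :
    hPF (n + 1) x y =
      if Even y then hPF n (x / 2) (y / 2) else (-1) ^ (epar x + epar (y / 2)) := by
  induction n, hn using Nat.le_induction generalizing x y with
  | base =>
    obtain ⟨hy1, hy2⟩ := abs_le.mp hy
    norm_num at hx1 hx2 hy1 hy2
    interval_cases x <;> interval_cases y <;> decide
  | succ n hn ih =>
    obtain ⟨k, rfl⟩ : ∃ k, n = k + 1 := ⟨n - 1, by omega⟩
    rcases eq_or_ne y 0 with rfl | hy0
    · have hpow : (2 : ℤ) ^ (k + 1 + 1) = 2 * 2 ^ (k + 1) := pow_succ' _ _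
      rw [hPF_succ_zero _ hx1 hx2, if_pos Even.zero, Int.zero_ediv,
        hPF_succ_zero _ (by omega) (by omega), cellSign_ediv_two]
    obtain ⟨hx1', hx2'⟩ := cellFold_sub_two_pow_mem hx1 hx2
    rw [hPF_add_two_of_ne_zero (k + 1) x hy0, ih hx1' hx2' (abs_sub_two_pow_le hy)]
    simp only [even_sub_two_pow_iff k.succ_ne_zero, even_abs]
    split_ifs with hye
    · have hy0' : y / 2 ≠ 0 := by obtain ⟨m, rfl⟩ := hye; omega
      rw [hPF_add_two_of_ne_zero k _ hy0', cellSign_ediv_two, cellSign_ediv_two,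
        ← abs_ediv_two_of_even hye, ← cellFold_ediv_two]
      congr 2 <;> rw [pow_succ] <;> omega
    · have hk : k ≠ 0 := by omega
      have hyh : (|y| - 2 ^ (k + 1)) / 2 = cellFold (y / 2) - 2 ^ k := by
        rw [← abs_ediv_two_of_odd (Int.not_even_iff_odd.mp hye), pow_succ]; omega
      rw [hyh, epar_sub_two_pow k.succ_ne_zero, epar_sub_two_pow hk, pow_add, pow_add,
        neg_one_pow_epar_cellFold, neg_one_pow_epar_cellFold, cellSign_ediv_two]
      linear_combination ((-1) ^ epar x * (-1) ^ epar (y / 2) * cellSign y * cellSign y) *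
        cellSign_mul_self x + ((-1) ^ epar x * (-1) ^ epar (y / 2)) * cellSign_mul_self y

end Paperfolding

/-- For `n ≥ 2` and `−2^(n−1) ≤ x, y < 2^(n−1)`:
(a) doubling: `v_{n+1}(2x, 2y) = v_{n+1}(2x, 2y+1) = v_n(x,y)` and
`h_{n+1}(2x, 2y) = h_{n+1}(2x+1, 2y) = h_n(x,y)`;
(b) inserted creases: `v_{n+1}(2x+1, 2y) = v_{n+1}(2x+1, 2y+1) = (−1)^(e(x)+e(y))`,
`h_{n+1}(2x, 2y+1) = −(−1)^(e(y))` and `h_{n+1}(2x+1, 2y+1) = (−1)^(e(y))`. -/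
theorem stmt14 (n : ℕ) (hn : 2 ≤ n) (x y : ℤ)
    (hx1 : -(2 ^ (n - 1)) ≤ x) (hx2 : x < 2 ^ (n - 1))
    (hy1 : -(2 ^ (n - 1)) ≤ y) (hy2 : y < 2 ^ (n - 1)) :
    (vPF (n + 1) (2 * x) (2 * y) = vPF n x y ∧
     vPF (n + 1) (2 * x) (2 * y + 1) = vPF n x y ∧
     hPF (n + 1) (2 * x) (2 * y) = hPF n x y ∧
     hPF (n + 1) (2 * x + 1) (2 * y) = hPF n x y) ∧
    (vPF (n + 1) (2 * x + 1) (2 * y) = (-1 : ℤ) ^ (epar x + epar y) ∧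
     vPF (n + 1) (2 * x + 1) (2 * y + 1) = (-1 : ℤ) ^ (epar x + epar y) ∧
     hPF (n + 1) (2 * x) (2 * y + 1) = -(-1 : ℤ) ^ (epar y) ∧
     hPF (n + 1) (2 * x + 1) (2 * y + 1) = (-1 : ℤ) ^ (epar y)) := by
  have hpow : (2 : ℤ) ^ n = 2 * 2 ^ (n - 1) := by
    rw [← pow_succ', Nat.sub_add_cancel (by omega)]
  have h2x : 2 * x / 2 = x := by omega
  have h2y : 2 * y / 2 = y := by omega
  have hx : (2 * x + 1) / 2 = x := by omega
  have hy : (2 * y + 1) / 2 = y := by omega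
  refine ⟨⟨?_, ?_, ?_, ?_⟩, ?_, ?_, ?_, ?_⟩ <;>
    first
    | rw [Paperfolding.vPF_succ_eq n hn (abs_le.mpr ⟨by omega, by omega⟩) (by omega) (by omega)]
    | rw [Paperfolding.hPF_succ_eq n hn (by omega) (by omega) (abs_le.mpr ⟨by omega, by omega⟩)]
  all_goals simp only [even_two_mul, Int.not_even_two_mul_add_one, if_true, if_false, h2x, h2y,
    hx, hy, Paperfolding.epar_two_mul, Paperfolding.epar_two_mul_add_one, zero_add, pow_add,
    pow_one, neg_one_mul]
end
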